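/- Every full-rank well-rounded sublattice Λ of ℤ² is of one of the following two forms: either there exist a, b, c, d ∈ ℤ with 0 < |d| ≤ |c| ≤ √3·|d| and max{|a|, |b|} > 0 such that Λ is spanned by the columns (ac+bd, bc−ad) and (ac−bd, bc+ad); or there exist a, b, c, d ∈ ℤ with c² + d² ≥ 4|cd| and max{|a|, |b|} > 0 such that Λ is spanned by the columns (ac−bd, ad+bc) and (ad−bc, ac+bd). -/

import Mathlib

/-- The standard inner product of two vectors in `ℤ²`. -/
def dot2 (x y : Fin 2 → ℤ) : ℤ := x 0 * y 0 + x 1 * y 1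

/-- The squared Euclidean norm of a vector in `ℤ²`. -/
def normSq2 (x : Fin 2 → ℤ) : ℤ := x 0 ^ 2 + x 1 ^ 2

/-- The determinant of the pair of vectors `x`, `y` in `ℤ²`. -/
def det2 (x y : Fin 2 → ℤ) : ℤ := x 0 * y 1 - x 1 * y 0

/-- A sublattice of `ℤ²` is full-rank (rank 2) if it contains two linearly
independent vectors, i.e. its elements span `ℝ²`. -/
def IsFullRank (L : AddSubgroup (Fin 2 → ℤ)) : Prop :=
  ∃ x ∈ L, ∃ y ∈ L, det2 x y ≠ 0

/-- `x` is a minimal vector of the lattice `L`: it is a nonzero vector of `L` of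
least Euclidean norm, i.e. `‖x‖ = |L|`. -/
def IsMinVec (L : AddSubgroup (Fin 2 → ℤ)) (x : Fin 2 → ℤ) : Prop :=
  x ∈ L ∧ x ≠ 0 ∧ ∀ y ∈ L, y ≠ 0 → normSq2 x ≤ normSq2 y

/-- `L` is well-rounded: its minimal vectors span `ℝ²`, i.e. there exist two
linearly independent minimal vectors. -/
def IsWellRounded (L : AddSubgroup (Fin 2 → ℤ)) : Prop :=
  ∃ x y, IsMinVec L x ∧ IsMinVec L y ∧ det2 x y ≠ 0

/-- The sublattice of `ℤ²` spanned over `ℤ` by the vectors `v` and `w`. -/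
def latticeOf (v w : Fin 2 → ℤ) : AddSubgroup (Fin 2 → ℤ) :=
  AddSubgroup.closure {v, w}

lemma unit_classify (u : GaussianInt) (h : Zsqrtd.norm u = 1) :
    u = 1 ∨ u = -1 ∨ u = ⟨0, 1⟩ ∨ u = ⟨0, -1⟩ := by
  obtain ⟨p, q⟩ := u
  simp only [Zsqrtd.norm] at h
  have hre : p * p + q * q = 1 := by linarith
  have hp : -1 ≤ p ∧ p ≤ 1 := by
    constructor <;> nlinarith [mul_self_nonneg q, mul_self_nonneg (p-1), mul_self_nonneg (p+1)]
  have hq : -1 ≤ q ∧ q ≤ 1 := by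
    constructor <;> nlinarith [mul_self_nonneg p, mul_self_nonneg (q-1), mul_self_nonneg (q+1)]
  obtain ⟨hp1, hp2⟩ := hp
  obtain ⟨hq1, hq2⟩ := hq
  interval_cases p <;> interval_cases q <;> simp_all <;> decide

open EuclideanDomain in
lemma gauss_decomp (ξ η : GaussianInt) (hξ : ξ ≠ 0) (hη : η ≠ 0)
    (hnorm : Zsqrtd.norm ξ = Zsqrtd.norm η) :
    ∃ g δ : GaussianInt, δ ≠ 0 ∧ g ≠ 0 ∧ ξ = g * δ ∧
      (η = g * star δ ∨ η = -(g * star δ) ∨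
       η = g * star δ * ⟨0, 1⟩ ∨ η = -(g * star δ * ⟨0, 1⟩)) := by
  have hg0 : gcd ξ η ≠ 0 := by
    rw [Ne, EuclideanDomain.gcd_eq_zero_iff]
    tauto
  obtain ⟨ξ', hξ'⟩ := gcd_dvd_left ξ η
  obtain ⟨η', hη'⟩ := gcd_dvd_right ξ η
  have hξ'0 : ξ' ≠ 0 := fun h => hξ (by rw [hξ', h, mul_zero])
  have hη'0 : η' ≠ 0 := fun h => hη (by rw [hη', h, mul_zero])
  have hcop : IsCoprime ξ' η' := by
    have hbez := gcd_eq_gcd_ab ξ η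
    refine ⟨gcdA ξ η, gcdB ξ η, ?_⟩
    apply mul_left_cancel₀ hg0
    rw [mul_one]
    calc gcd ξ η * (gcdA ξ η * ξ' + gcdB ξ η * η')
        = (gcd ξ η * ξ') * gcdA ξ η + (gcd ξ η * η') * gcdB ξ η := by ring
      _ = ξ * gcdA ξ η + η * gcdB ξ η := by rw [← hξ', ← hη']
      _ = gcd ξ η := hbez.symm
  have hnval : ∀ z : GaussianInt, z ≠ 0 → Zsqrtd.norm z ≠ 0 := by
    intro z hz
    rw [Ne, Zsqrtd.norm_eq_zero_iff (by norm_num : (-1:ℤ) < 0)]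
    exact hz
  have hne : Zsqrtd.norm ξ' = Zsqrtd.norm η' := by
    have h1 : Zsqrtd.norm (gcd ξ η) * Zsqrtd.norm ξ' = Zsqrtd.norm (gcd ξ η) * Zsqrtd.norm η' := by
      rw [← Zsqrtd.norm_mul, ← Zsqrtd.norm_mul, ← hξ', ← hη', hnorm]
    exact mul_left_cancel₀ (hnval _ hg0) h1
  have hdvd : ξ' ∣ star η' := by
    apply hcop.dvd_of_dvd_mul_right
    refine ⟨star ξ', ?_⟩
    rw [mul_comm (star η') η', ← Zsqrtd.norm_eq_mul_conj, ← hne, Zsqrtd.norm_eq_mul_conj]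
  obtain ⟨u, hu⟩ := hdvd
  have hnu : Zsqrtd.norm u = 1 := by
    apply mul_left_cancel₀ (hnval ξ' hξ'0)
    rw [← Zsqrtd.norm_mul, ← hu, Zsqrtd.norm_conj, hne, mul_one]
  have hη'' : η' = star ξ' * star u := by
    have h2 := congrArg star hu
    rw [star_star, star_mul'] at h2
    exact h2
  refine ⟨gcd ξ η, ξ', hξ'0, hg0, hξ', ?_⟩
  rcases unit_classify u hnu with h | h | h | h <;> subst h
  · left
    calc η = gcd ξ η * η' := hη'
      _ = gcd ξ η * star ξ' := by rw [hη'']; simp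
  · right; left
    have hs : star (-1 : GaussianInt) = -1 := by simp
    calc η = gcd ξ η * η' := hη'
      _ = -(gcd ξ η * star ξ') := by rw [hη'', hs]; ring
  · right; right; right
    have hs : star (⟨0, 1⟩ : GaussianInt) = -⟨0, 1⟩ := by
      ext <;> simp
    calc η = gcd ξ η * η' := hη'
      _ = -(gcd ξ η * star ξ' * ⟨0, 1⟩) := by rw [hη'', hs]; ring
  · right; right; left
    have hs : star (⟨0, -1⟩ : GaussianInt) = ⟨0, 1⟩ := by
      ext <;> simp
    calc η = gcd ξ η * η' := hη'
      _ = gcd ξ η * star ξ' * ⟨0, 1⟩ := by rw [hη'', hs]; ring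

lemma latticeOf_neg_right (v w : Fin 2 → ℤ) : latticeOf v (-w) = latticeOf v w := by
  unfold latticeOf
  apply le_antisymm
  · apply (AddSubgroup.closure_le _).mpr
    intro z hz
    rcases hz with rfl | hz
    · exact AddSubgroup.subset_closure (Set.mem_insert _ _)
    · rw [Set.mem_singleton_iff] at hz
      rw [hz]
      exact AddSubgroup.neg_mem _
        (AddSubgroup.subset_closure (Set.mem_insert_of_mem _ (Set.mem_singleton _)))
  · apply (AddSubgroup.closure_le _).mpr
    intro z hz
    rcases hz with rfl | hz
    · exact AddSubgroup.subset_closure (Set.mem_insert _ _)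
    · rw [Set.mem_singleton_iff] at hz
      have h2 := AddSubgroup.neg_mem (AddSubgroup.closure {v, -w})
        (AddSubgroup.subset_closure (Set.mem_insert_of_mem v (Set.mem_singleton (-w))))
      rw [hz]
      simpa using h2

lemma abs_le_abs_sq {e c : ℤ} (h : e^2 ≤ c^2) : |e| ≤ |c| := by
  by_contra h'
  push_neg at h'
  have := mul_self_lt_mul_self (abs_nonneg c) h'
  nlinarith [sq_abs c, sq_abs e]

lemma sqrt3_cond {c d : ℤ} (h : c^2 ≤ 3*d^2) : (|c| : ℝ) ≤ Real.sqrt 3 * (|d| : ℝ) := by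
  have h' : ((c:ℝ))^2 ≤ 3*(d:ℝ)^2 := by exact_mod_cast h
  rw [← Real.sqrt_sq_eq_abs, ← Real.sqrt_sq_eq_abs]
  rw [← Real.sqrt_mul (by norm_num : (3:ℝ) ≥ 0)]
  exact Real.sqrt_le_sqrt (by linarith)

lemma max_abs_pos {a b : ℤ} (h : ¬(a = 0 ∧ b = 0)) : 0 < max |a| |b| := by
  rcases not_and_or.mp h with h | h
  · exact lt_max_of_lt_left (abs_pos.mpr h)
  · exact lt_max_of_lt_right (abs_pos.mpr h)

lemma vec_eq (p q : ℤ) (x : Fin 2 → ℤ) (h0 : p = x 0) (h1 : q = x 1) : ![p, q] = x := by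
  funext i
  fin_cases i
  · simpa using h0
  · simpa using h1

lemma sq_zero_of_nonpos {c : ℤ} (h : c^2 ≤ 0) : c = 0 := by nlinarith [sq_nonneg c]

lemma case1 (x y : Fin 2 → ℤ) (hdotb : 2 * |dot2 x y| ≤ normSq2 x)
    (a b c e : ℤ) (hg : ¬(a = 0 ∧ b = 0)) (hδ : ¬(c = 0 ∧ e = 0))
    (hx0 : x 0 = a*c - b*e) (hx1 : x 1 = a*e + b*c)
    (hy : (y 0 = a*c + b*e ∧ y 1 = b*c - a*e) ∨ (y 0 = -(a*c + b*e) ∧ y 1 = -(b*c - a*e))) :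
    ∃ A B C D : ℤ, 0 < |D| ∧ |D| ≤ |C| ∧ (|C| : ℝ) ≤ Real.sqrt 3 * (|D| : ℝ) ∧
      0 < max |A| |B| ∧ latticeOf x y = latticeOf ![A*C+B*D, B*C-A*D] ![A*C-B*D, B*C+A*D] := by
  have hN : 0 < a^2 + b^2 := by
    rcases not_and_or.mp hg with h | h
    · have := abs_pos.mpr h; nlinarith [sq_abs a, sq_nonneg b]
    · have := abs_pos.mpr h; nlinarith [sq_abs b, sq_nonneg a]
  have hm : normSq2 x = (a^2+b^2)*(c^2+e^2) := by
    simp only [normSq2, hx0, hx1]; ring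
  have h2d : |2 * dot2 x y| ≤ (a^2+b^2)*(c^2+e^2) := by
    rw [abs_mul, abs_two, ← hm]
    exact hdotb
  obtain ⟨hlo, hhi⟩ := abs_le.mp h2d
  have hd : dot2 x y = (a^2+b^2)*(c^2-e^2) ∨ dot2 x y = -((a^2+b^2)*(c^2-e^2)) := by
    rcases hy with ⟨h0, h1⟩ | ⟨h0, h1⟩
    · left; simp only [dot2, hx0, hx1, h0, h1]; ring
    · right; simp only [dot2, hx0, hx1, h0, h1]; ring
  have h3a : c^2 ≤ 3*e^2 := by
    by_contra hc
    push_neg at hc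
    have hpos := mul_pos hN (by linarith : (0:ℤ) < c^2 - 3*e^2)
    rcases hd with h | h <;> nlinarith [hhi, hlo]
  have h3b : e^2 ≤ 3*c^2 := by
    by_contra hc
    push_neg at hc
    have hpos := mul_pos hN (by linarith : (0:ℤ) < e^2 - 3*c^2)
    rcases hd with h | h <;> nlinarith [hhi, hlo]
  rcases le_or_gt (e^2) (c^2) with hce | hce
  · have he : e ≠ 0 := by
      intro h
      subst h
      exact hδ ⟨sq_zero_of_nonpos (by linarith), rfl⟩
    refine ⟨a, b, c, -e, by simpa [abs_neg] using abs_pos.mpr he, ?_, ?_, max_abs_pos hg, ?_⟩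
    · rw [abs_neg]; exact abs_le_abs_sq hce
    · have hs := sqrt3_cond (d := e) h3a
      simpa [abs_neg] using hs
    · have hv1 : ![a*c + b*(-e), b*c - a*(-e)] = x := vec_eq _ _ x (by rw [hx0]; ring) (by rw [hx1]; ring)
      rcases hy with ⟨h0, h1⟩ | ⟨h0, h1⟩
      · have hv2 : ![a*c - b*(-e), b*c + a*(-e)] = y := vec_eq _ _ y (by rw [h0]; ring) (by rw [h1]; ring)
        rw [hv1, hv2]
      · have hv2 : ![a*c - b*(-e), b*c + a*(-e)] = -y :=
          vec_eq _ _ (-y) (by simp only [Pi.neg_apply, h0]; ring) (by simp only [Pi.neg_apply, h1]; ring)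
        rw [hv1, hv2, latticeOf_neg_right]
  · have hc : c ≠ 0 := by
      intro h
      subst h
      exact hδ ⟨rfl, sq_zero_of_nonpos (by linarith)⟩
    refine ⟨-b, a, e, c, abs_pos.mpr hc, abs_le_abs_sq (by linarith), sqrt3_cond h3b,
      max_abs_pos (fun h' => hg ⟨h'.2, by simpa using h'.1⟩), ?_⟩
    have hv1 : ![(-b)*e + a*c, a*e - (-b)*c] = x := vec_eq _ _ x (by rw [hx0]; ring) (by rw [hx1]; ring)
    rcases hy with ⟨h0, h1⟩ | ⟨h0, h1⟩
    · have hv2 : ![(-b)*e - a*c, a*e + (-b)*c] = -y :=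
        vec_eq _ _ (-y) (by simp only [Pi.neg_apply, h0]; ring) (by simp only [Pi.neg_apply, h1]; ring)
      rw [hv1, hv2, latticeOf_neg_right]
    · have hv2 : ![(-b)*e - a*c, a*e + (-b)*c] = y := vec_eq _ _ y (by rw [h0]; ring) (by rw [h1]; ring)
      rw [hv1, hv2]

lemma case2 (x y : Fin 2 → ℤ) (hdotb : 2 * |dot2 x y| ≤ normSq2 x)
    (a b c e : ℤ) (hg : ¬(a = 0 ∧ b = 0))
    (hx0 : x 0 = a*c - b*e) (hx1 : x 1 = a*e + b*c)
    (hy : (y 0 = a*e - b*c ∧ y 1 = a*c + b*e) ∨ (y 0 = -(a*e - b*c) ∧ y 1 = -(a*c + b*e))) :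
    ∃ A B C D : ℤ, 4 * |C * D| ≤ C^2 + D^2 ∧
      0 < max |A| |B| ∧ latticeOf x y = latticeOf ![A*C-B*D, A*D+B*C] ![A*D-B*C, A*C+B*D] := by
  have hN : 0 < a^2 + b^2 := by
    rcases not_and_or.mp hg with h | h
    · have := abs_pos.mpr h; nlinarith [sq_abs a, sq_nonneg b]
    · have := abs_pos.mpr h; nlinarith [sq_abs b, sq_nonneg a]
  have hm : normSq2 x = (a^2+b^2)*(c^2+e^2) := by
    simp only [normSq2, hx0, hx1]; ring
  have h2d : |2 * dot2 x y| ≤ (a^2+b^2)*(c^2+e^2) := by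
    rw [abs_mul, abs_two, ← hm]
    exact hdotb
  obtain ⟨hlo, hhi⟩ := abs_le.mp h2d
  have hd : dot2 x y = (a^2+b^2)*(2*c*e) ∨ dot2 x y = -((a^2+b^2)*(2*c*e)) := by
    rcases hy with ⟨h0, h1⟩ | ⟨h0, h1⟩
    · left; simp only [dot2, hx0, hx1, h0, h1]; ring
    · right; simp only [dot2, hx0, hx1, h0, h1]; ring
  have hcd : 4 * |c * e| ≤ c^2 + e^2 := by
    rcases abs_cases (c * e) with ⟨hab, _⟩ | ⟨hab, _⟩ <;> rw [hab] <;> by_contra hcon <;>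
      push_neg at hcon
    · have hpos := mul_pos hN (by linarith : (0:ℤ) < 4*(c*e) - (c^2+e^2))
      rcases hd with h | h <;> nlinarith [hhi, hlo]
    · have hpos := mul_pos hN (by linarith : (0:ℤ) < -(4*(c*e)) - (c^2+e^2))
      rcases hd with h | h <;> nlinarith [hhi, hlo]
  refine ⟨a, b, c, e, hcd, max_abs_pos hg, ?_⟩
  have hv1 : ![a*c - b*e, a*e + b*c] = x := vec_eq _ _ x hx0.symm hx1.symm
  rcases hy with ⟨h0, h1⟩ | ⟨h0, h1⟩
  · have hv2 : ![a*e - b*c, a*c + b*e] = y := vec_eq _ _ y h0.symm h1.symm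
    rw [hv1, hv2]
  · have hv2 : ![a*e - b*c, a*c + b*e] = -y :=
      vec_eq _ _ (-y) (by simp only [Pi.neg_apply, h0]; ring) (by simp only [Pi.neg_apply, h1]; ring)
    rw [hv1, hv2, latticeOf_neg_right]

lemma round_int (s D : ℤ) (hD : D ≠ 0) : ∃ p : ℤ, 2 * |s - p * D| ≤ |D| := by
  have h1 : 0 ≤ s % D := Int.emod_nonneg s hD
  have h2 : s % D < |D| := by rw [Int.abs_eq_natAbs]; exact Int.emod_lt s hD
  have h3 : D * (s / D) + s % D = s := Int.mul_ediv_add_emod s D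
  have he : s - s / D * D = s % D := by rw [mul_comm]; omega
  rcases le_or_gt (2 * (s % D)) |D| with h | h
  · exact ⟨s / D, by rw [he, abs_of_nonneg h1]; omega⟩
  · rcases lt_or_gt_of_ne hD with hneg | hpos
    · refine ⟨s / D - 1, ?_⟩
      have he2 : s - (s / D - 1) * D = s % D + D := by rw [sub_mul, one_mul]; omega
      have habs : |D| = -D := abs_of_neg hneg
      rw [he2, abs_of_nonpos (by omega)]; omega
    · refine ⟨s / D + 1, ?_⟩
      have he2 : s - (s / D + 1) * D = s % D - D := by rw [add_mul, one_mul]; omega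
      have habs : |D| = D := abs_of_pos hpos
      rw [he2, abs_of_nonpos (by omega)]; omega

lemma normSq2_pos {x : Fin 2 → ℤ} (hx : x ≠ 0) : 0 < normSq2 x := by
  rcases lt_or_eq_of_le (by unfold normSq2; positivity : (0:ℤ) ≤ normSq2 x) with h | h
  · exact h
  · exfalso; apply hx; funext i
    have h0 : x 0 = 0 ∧ x 1 = 0 := by
      unfold normSq2 at h; constructor <;> nlinarith [sq_nonneg (x 0), sq_nonneg (x 1)]
    fin_cases i <;> simp [h0.1, h0.2]

lemma dot_bound {Λ : AddSubgroup (Fin 2 → ℤ)} {x y : Fin 2 → ℤ}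
    (hx : IsMinVec Λ x) (hy : IsMinVec Λ y) (hdet : det2 x y ≠ 0) :
    2 * |dot2 x y| ≤ normSq2 x := by
  obtain ⟨hxm, hx0, hxmin⟩ := hx
  obtain ⟨hym, hy0, hymin⟩ := hy
  have hsub : x - y ∈ Λ := Λ.sub_mem hxm hym
  have hadd : x + y ∈ Λ := Λ.add_mem hxm hym
  have hsub0 : x - y ≠ 0 := by
    intro h; apply hdet
    have : x = y := by rwa [sub_eq_zero] at h
    simp [this, det2]; ring
  have hadd0 : x + y ≠ 0 := by
    intro h; apply hdet
    have : x = -y := by rwa [add_eq_zero_iff_eq_neg] at h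
    simp [this, det2]; ring
  have h1 := hxmin _ hsub hsub0
  have h2 := hxmin _ hadd hadd0
  have e1 : normSq2 (x - y) = normSq2 x + normSq2 y - 2 * dot2 x y := by
    simp [normSq2, dot2]; ring
  have e2 : normSq2 (x + y) = normSq2 x + normSq2 y + 2 * dot2 x y := by
    simp [normSq2, dot2]; ring
  have hxy : normSq2 x ≤ normSq2 y := hxmin _ hym hy0
  have hyx : normSq2 y ≤ normSq2 x := hymin _ hxm hx0
  rcases abs_cases (dot2 x y) with ⟨h, _⟩ | ⟨h, _⟩ <;> omega

lemma sq4_le {a b : ℤ} (h : 2 * |a| ≤ |b|) : 4 * a^2 ≤ b^2 := by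
  have h2 := mul_le_mul h h (by positivity) (abs_nonneg b)
  nlinarith [sq_abs a, sq_abs b]

lemma arith_contra (m D s' t' dot nw : ℤ) (hmpos : 0 < m) (hD : D ≠ 0)
    (key : D^2 * nw = s'^2 * m + 2 * s' * t' * dot + t'^2 * m) (hge : m ≤ nw)
    (hs2 : 4 * s'^2 ≤ D^2) (ht2 : 4 * t'^2 ≤ D^2) (hd2 : 4 * dot^2 ≤ m^2) : False := by
  have hD2 : 0 < D^2 := by positivity
  have hkey2 : D^2 * m ≤ D^2 * nw := mul_le_mul_of_nonneg_left hge (sq_nonneg D)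
  have h6 : 4 * s'^2 * m ≤ D^2 * m := by
    have := mul_le_mul_of_nonneg_right hs2 hmpos.le; linarith
  have h7 : 4 * t'^2 * m ≤ D^2 * m := by
    have := mul_le_mul_of_nonneg_right ht2 hmpos.le; linarith
  have h5 : D^2 * m ≤ 4 * (s' * t' * dot) := by nlinarith [key, hkey2, h6, h7]
  have h8 : (D^2*m) * (D^2*m) ≤ (4 * (s' * t' * dot)) * (4 * (s' * t' * dot)) :=
    mul_self_le_mul_self (by positivity) h5
  have h9 : (4*s'^2) * (4*t'^2) ≤ D^2 * D^2 := mul_le_mul hs2 ht2 (by positivity) (sq_nonneg D)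
  have hA : (4*s'^2) * (4*t'^2) * dot^2 ≤ (D^2 * D^2) * dot^2 :=
    mul_le_mul_of_nonneg_right h9 (sq_nonneg _)
  have hB : (D^2*D^2) * (4*dot^2) ≤ (D^2*D^2) * m^2 :=
    mul_le_mul_of_nonneg_left hd2 (by positivity)
  nlinarith [h8, hA, hB, mul_pos (mul_pos hD2 hD2) (mul_pos hmpos hmpos)]

lemma min_gen {Λ : AddSubgroup (Fin 2 → ℤ)} {x y : Fin 2 → ℤ}
    (hx : IsMinVec Λ x) (hy : IsMinVec Λ y) (hdet : det2 x y ≠ 0) :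
    Λ = latticeOf x y := by
  have hdot := dot_bound hx hy hdet
  obtain ⟨hxm, hx0, hxmin⟩ := hx
  obtain ⟨hym, hy0, hymin⟩ := hy
  have hxy : normSq2 x = normSq2 y := le_antisymm (hxmin _ hym hy0) (hymin _ hxm hx0)
  set m := normSq2 x with hm
  clear_value m
  have hmpos : 0 < m := hm ▸ normSq2_pos hx0
  set D := det2 x y with hD
  clear_value D
  apply le_antisymm
  · intro z hz
    set s := det2 z y with hs
    clear_value s
    set t := det2 x z with ht
    clear_value t
    have cram : ∀ i, D * z i = s * x i + t * y i := by
      intro i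
      have h2 : i = 0 ∨ i = 1 := by omega
      rcases h2 with rfl | rfl <;> (simp only [hs, ht, hD, det2]; ring)
    obtain ⟨p, hp⟩ := round_int s D hdet
    obtain ⟨q, hq⟩ := round_int t D hdet
    have hw : z - (p • x + q • y) = 0 := by
      by_contra hw0
      have hwm : z - (p • x + q • y) ∈ Λ := by
        refine Λ.sub_mem hz (Λ.add_mem (Λ.zsmul_mem hxm p) (Λ.zsmul_mem hym q))
      have hge : m ≤ normSq2 (z - (p • x + q • y)) := hxmin _ hwm hw0
      set w := z - (p • x + q • y) with hwdef
      clear_value w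
      have hwc : ∀ i, D * w i = (s - p * D) * x i + (t - q * D) * y i := by
        intro i
        have : w i = z i - (p * x i + q * y i) := by simp [hwdef]
        rw [this]; have := cram i; ring_nf; ring_nf at this; linarith
      set s' := s - p * D with hs'
      clear_value s'
      set t' := t - q * D with ht'
      clear_value t'
      have key : D^2 * normSq2 w = s'^2 * m + 2 * s' * t' * dot2 x y + t'^2 * m := by
        have h0 := hwc 0
        have h1 := hwc 1
        have hh : (D * w 0)^2 + (D * w 1)^2
            = (s' * x 0 + t' * y 0)^2 + (s' * x 1 + t' * y 1)^2 := by rw [h0, h1]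
        subst hm
        simp only [normSq2, dot2] at hxy ⊢
        linear_combination hh - t'^2 * hxy
      have hdm : 2 * |dot2 x y| ≤ |m| := by rwa [abs_of_pos hmpos]
      have hs2 := sq4_le hp
      have ht2 := sq4_le hq
      have hd2 := sq4_le hdm
      exact arith_contra m D s' t' (dot2 x y) (normSq2 w) hmpos hdet key hge hs2 ht2 hd2
    have : z = p • x + q • y := by rwa [sub_eq_zero] at hw
    rw [this]
    exact AddSubgroup.add_mem _
      (AddSubgroup.zsmul_mem _ (AddSubgroup.subset_closure (Set.mem_insert _ _)) p)
      (AddSubgroup.zsmul_mem _ (AddSubgroup.subset_closure (Set.mem_insert_of_mem _ (Set.mem_singleton _))) q)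
  · rw [latticeOf]
    apply AddSubgroup.closure_le Λ |>.mpr
    intro v hv
    rcases hv with h | h
    · exact h ▸ hxm
    · simp at h; exact h ▸ hym

/-- Every full-rank well-rounded sublattice of `ℤ²` is of one of the two forms
described in Lemmas `abcd1` and `abcd2` of the paper. -/
theorem stmt3 (Λ : AddSubgroup (Fin 2 → ℤ)) (hfr : IsFullRank Λ) (hwr : IsWellRounded Λ) :
    (∃ a b c d : ℤ, 0 < |d| ∧ |d| ≤ |c| ∧ (|c| : ℝ) ≤ Real.sqrt 3 * (|d| : ℝ) ∧
      0 < max |a| |b| ∧ Λ = latticeOf ![a*c+b*d, b*c-a*d] ![a*c-b*d, b*c+a*d]) ∨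
    (∃ a b c d : ℤ, 4 * |c * d| ≤ c ^ 2 + d ^ 2 ∧
      0 < max |a| |b| ∧ Λ = latticeOf ![a*c-b*d, a*d+b*c] ![a*d-b*c, a*c+b*d]) := by
  obtain ⟨x, y, hx, hy, hdet⟩ := hwr
  have hL : Λ = latticeOf x y := min_gen hx hy hdet
  have hdotb := dot_bound hx hy hdet
  have hx0 : x ≠ 0 := hx.2.1
  have hy0 : y ≠ 0 := hy.2.1
  have hnxy : normSq2 x = normSq2 y :=
    le_antisymm (hx.2.2 _ hy.1 hy0) (hy.2.2 _ hx.1 hx0)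
  have hnv : ∀ z : Fin 2 → ℤ, Zsqrtd.norm (⟨z 0, z 1⟩ : GaussianInt) = normSq2 z := by
    intro z; simp [Zsqrtd.norm, normSq2]; ring
  have hnz : ∀ z : Fin 2 → ℤ, z ≠ 0 → (⟨z 0, z 1⟩ : GaussianInt) ≠ 0 := by
    intro z hz h
    apply hz
    rw [Zsqrtd.ext_iff] at h
    simp at h
    funext i; fin_cases i
    · simpa using h.1
    · simpa using h.2
  obtain ⟨g, δ, hδ0, hg0, hgd, hcases⟩ :=
    gauss_decomp ⟨x 0, x 1⟩ ⟨y 0, y 1⟩ (hnz x hx0) (hnz y hy0)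
      (by rw [hnv x, hnv y, hnxy])
  have hgne : ¬(g.re = 0 ∧ g.im = 0) := by
    intro h
    exact hg0 (by rw [Zsqrtd.ext_iff]; simpa using h)
  have hδne : ¬(δ.re = 0 ∧ δ.im = 0) := by
    intro h
    exact hδ0 (by rw [Zsqrtd.ext_iff]; simpa using h)
  rw [Zsqrtd.ext_iff] at hgd
  obtain ⟨hr, hi⟩ := hgd
  simp [Zsqrtd.re_mul, Zsqrtd.im_mul] at hr hi
  have ex0 : x 0 = g.re * δ.re - g.im * δ.im := by linear_combination hr
  have ex1 : x 1 = g.re * δ.im + g.im * δ.re := by linear_combination hi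
  rcases hcases with hA | hA | hA | hA <;>
    [skip; skip; skip; skip] <;>
    rw [Zsqrtd.ext_iff] at hA <;> obtain ⟨hr2, hi2⟩ := hA <;>
    simp [Zsqrtd.re_mul, Zsqrtd.im_mul] at hr2 hi2
  · left
    obtain ⟨A, B, C, D, h1, h2, h3, h4, h5⟩ :=
      case1 x y hdotb g.re g.im δ.re δ.im hgne hδne ex0 ex1
        (Or.inl ⟨by linear_combination hr2, by linear_combination hi2⟩)
    exact ⟨A, B, C, D, h1, h2, h3, h4, hL.trans h5⟩
  · left
    obtain ⟨A, B, C, D, h1, h2, h3, h4, h5⟩ :=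
      case1 x y hdotb g.re g.im δ.re δ.im hgne hδne ex0 ex1
        (Or.inr ⟨by linear_combination hr2, by linear_combination hi2⟩)
    exact ⟨A, B, C, D, h1, h2, h3, h4, hL.trans h5⟩
  · right
    obtain ⟨A, B, C, D, h1, h2, h3⟩ :=
      case2 x y hdotb g.re g.im δ.re δ.im hgne ex0 ex1
        (Or.inl ⟨by linear_combination hr2, by linear_combination hi2⟩)
    exact ⟨A, B, C, D, h1, h2, hL.trans h3⟩
  · right
    obtain ⟨A, B, C, D, h1, h2, h3⟩ :=
      case2 x y hdotb g.re g.im δ.re δ.im hgne ex0 ex1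
        (Or.inr ⟨by linear_combination hr2, by linear_combination hi2⟩)
    exact ⟨A, B, C, D, h1, h2, hL.trans h3⟩
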